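/- Let X be an n × p real matrix, y ∈ ℝ^n with y ≠ ȳ 1 where ȳ = (1/n) Σ_{i=1}^n y_i, and λ ≥ 0. Then (β₀, β) = (ȳ, 0) is a global minimizer over ℝ × ℝ^p of the square-root LASSO objective (β₀, β) ↦ ‖y − β₀ 1 − X β‖₂ + λ ‖β‖₁ if and only if λ ≥ ‖Xᵀ(y − ȳ 1)‖_∞ / ‖y − ȳ 1‖₂. -/

import Mathlib

/-!
Write `r = y - ȳ 1`, which is orthogonal to `1`, and `c = Xᵀ r`. For any `(β₀, β)`,
`⟪y - β₀ 1 - X β, r⟫ = ‖r‖₂² - ⟪β, c⟫ ≥ ‖r‖₂² - ‖β‖₁ ‖c‖_∞`, so Cauchy–Schwarz gives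
`‖y - β₀ 1 - X β‖₂ ≥ ‖r‖₂ - λ ‖β‖₁` as soon as `‖c‖_∞ ≤ λ ‖r‖₂`. Conversely, if
`|c j| > λ ‖r‖₂`, moving `β` from `0` a small step `t` along `sign (c j) • e j` lowers the objective:
its right derivative at `t = 0` is `λ - |c j| / ‖r‖₂ < 0`.
-/

open Finset Matrix

theorem exists_pos_sqrt_add_lt {a b d lam : ℝ} (ha : 0 < a) (hb : lam * a < b) :
    ∃ t > 0, √(a ^ 2 - 2 * t * b + t ^ 2 * d) + lam * t < a := by
  set ε := b - lam * a
  have hε : 0 < ε := sub_pos.2 hb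
  set t := min (ε / (|d - lam ^ 2| + 1)) (a / (|lam| + 1))
  have ht : 0 < t := lt_min (by positivity) (by positivity)
  have htε : t * (|d - lam ^ 2| + 1) ≤ ε := (le_div_iff₀ (by positivity)).1 (min_le_left _ _)
  have hta : t * (|lam| + 1) ≤ a := (le_div_iff₀ (by positivity)).1 (min_le_right _ _)
  refine ⟨t, ht, ?_⟩
  -- `(a - λ t)² - (a² - 2 t b + t² d) = t (2 ε - t (d - λ²))`, and `t (d - λ²) < 2 ε`.
  have hpos : 0 < a - lam * t := by nlinarith [le_abs_self lam]
  rw [← lt_sub_iff_add_lt, Real.sqrt_lt' hpos]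
  nlinarith [mul_le_mul_of_nonneg_left (le_abs_self (d - lam ^ 2)) ht.le]

theorem sum_sub_mean_eq_zero {ι : Type*} [Fintype ι] (y : ι → ℝ) :
    ∑ i, (y i - 1 / (Fintype.card ι : ℝ) * ∑ i, y i) = 0 := by
  rcases isEmpty_or_nonempty ι with hι | hι
  · simp
  · rw [sum_sub_distrib, sum_const, card_univ, nsmul_eq_mul]
    field_simp
    ring

variable {ι κ : Type*} [Fintype ι] [Fintype κ]

theorem dotProduct_le_sum_abs_mul_norm (β c : κ → ℝ) : β ⬝ᵥ c ≤ (∑ j, |β j|) * ‖c‖ := by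
  rw [dotProduct, sum_mul]
  refine sum_le_sum fun j _ => ?_
  calc β j * c j ≤ |β j| * |c j| := (le_abs_self _).trans (abs_mul _ _).le
    _ ≤ |β j| * ‖c‖ := mul_le_mul_of_nonneg_left (norm_le_pi_norm c j) (abs_nonneg _)

theorem sum_sq_sub_mulVec_single [DecidableEq κ] (X : Matrix ι κ ℝ) (r : ι → ℝ) (j : κ) (u : ℝ) :
    ∑ i, (r i - (X *ᵥ Pi.single j u) i) ^ 2
      = ∑ i, r i ^ 2 - 2 * u * (Xᵀ *ᵥ r) j + u ^ 2 * ∑ i, X i j ^ 2 := by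
  have hcol i : (X *ᵥ Pi.single j u) i = X i j * u := dotProduct_single _ _ _
  simp only [hcol]
  simp only [mulVec, dotProduct, transpose_apply, mul_sum]
  rw [← sum_sub_distrib, ← sum_add_distrib]
  exact sum_congr rfl fun i _ => by ring

theorem sum_abs_pi_single [DecidableEq κ] (j : κ) (u : ℝ) : ∑ k, |Pi.single j u k| = |u| := by
  simp [Pi.single_apply, apply_ite]

theorem exists_sqrt_sum_sq_sub_add_lt (X : Matrix ι κ ℝ) (r : ι → ℝ) {lam : ℝ}
    (hr : 0 < √(∑ i, r i ^ 2)) {j : κ} (hj : lam * √(∑ i, r i ^ 2) < |(Xᵀ *ᵥ r) j|) :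
    ∃ β : κ → ℝ, √(∑ i, (r i - (X *ᵥ β) i) ^ 2) + lam * ∑ k, |β k| < √(∑ i, r i ^ 2) := by
  classical
  obtain ⟨s, hs, hsc⟩ : ∃ s : ℝ, |s| = 1 ∧ s * (Xᵀ *ᵥ r) j = |(Xᵀ *ᵥ r) j| := by
    rcases abs_choice ((Xᵀ *ᵥ r) j) with h | h
    · exact ⟨1, abs_one, by rw [h, one_mul]⟩
    · exact ⟨-1, by simp, by rw [h, neg_one_mul]⟩
  obtain ⟨t, ht, hlt⟩ := exists_pos_sqrt_add_lt (d := ∑ i, X i j ^ 2) hr hj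
  refine ⟨Pi.single j (s * t), ?_⟩
  have hs2 : s ^ 2 = 1 := by rw [← sq_abs, hs, one_pow]
  set a := √(∑ i, r i ^ 2)
  have ha2 : a ^ 2 = ∑ i, r i ^ 2 := Real.sq_sqrt (sum_nonneg fun i _ => sq_nonneg (r i))
  rwa [sum_sq_sub_mulVec_single, sum_abs_pi_single, abs_mul, hs, abs_of_pos ht, one_mul, ← ha2,
    show 2 * (s * t) * (Xᵀ *ᵥ r) j = 2 * t * |(Xᵀ *ᵥ r) j| by rw [← hsc]; ring,
    mul_pow, hs2, one_mul]

theorem sqrt_sum_sq_le_of_norm_le (X : Matrix ι κ ℝ) (y : ι → ℝ) {ybar lam : ℝ} (hlam : 0 ≤ lam)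
    (hmean : ∑ i, (y i - ybar) = 0)
    (hc : ‖Xᵀ *ᵥ (fun i => y i - ybar)‖ ≤ lam * √(∑ i, (y i - ybar) ^ 2)) (β₀ : ℝ) (β : κ → ℝ) :
    √(∑ i, (y i - ybar) ^ 2) ≤ √(∑ i, (y i - β₀ - (X *ᵥ β) i) ^ 2) + lam * ∑ j, |β j| := by
  set r : ι → ℝ := fun i => y i - ybar
  set v : ι → ℝ := fun i => y i - β₀ - (X *ᵥ β) i
  set a := √(∑ i, r i ^ 2)
  have ha2 : a ^ 2 = ∑ i, r i ^ 2 := Real.sq_sqrt (sum_nonneg fun i _ => sq_nonneg (r i))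
  have hXβ : ∑ i, (X *ᵥ β) i * r i = β ⬝ᵥ (Xᵀ *ᵥ r) := by
    change (X *ᵥ β) ⬝ᵥ r = _
    rw [dotProduct_comm, dotProduct_mulVec, mulVec_transpose, dotProduct_comm]
  have hvr : ∑ i, v i * r i = a ^ 2 - β ⬝ᵥ (Xᵀ *ᵥ r) := by
    have hv i : v i * r i = r i ^ 2 + (ybar - β₀) * r i - (X *ᵥ β) i * r i := by
      simp only [v, r]; ring
    rw [sum_congr rfl fun i _ => hv i, sum_sub_distrib, sum_add_distrib, ← mul_sum, hmean,
      mul_zero, add_zero, ha2, hXβ]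
  have hcs : ∑ i, v i * r i ≤ √(∑ i, v i ^ 2) * a := Real.sum_mul_le_sqrt_mul_sqrt _ v r
  have hholder := dotProduct_le_sum_abs_mul_norm β (Xᵀ *ᵥ r)
  have hl1 : 0 ≤ ∑ j, |β j| := sum_nonneg fun j _ => abs_nonneg _
  have hkey : a * a ≤ (√(∑ i, v i ^ 2) + lam * ∑ j, |β j|) * a := by
    nlinarith [mul_le_mul_of_nonneg_left hc hl1]
  nlinarith [Real.sqrt_nonneg (∑ i, v i ^ 2), Real.sqrt_nonneg (∑ i, r i ^ 2), mul_nonneg hlam hl1]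

/-- Zero-thresholding function of square-root LASSO with intercept:
if `y ≠ ȳ 1`, then `(β₀, β) = (ȳ, 0)` globally minimizes
`(β₀, β) ↦ ‖y − β₀ 1 − X β‖₂ + λ ‖β‖₁` iff
`λ ≥ ‖Xᵀ(y − ȳ 1)‖_∞ / ‖y − ȳ 1‖₂`. -/
theorem stmt13 {n p : ℕ} (X : Matrix (Fin n) (Fin p) ℝ) (y : Fin n → ℝ)
    (lam : ℝ) (hlam : 0 ≤ lam)
    (ybar : ℝ) (hybar : ybar = (1 / (n : ℝ)) * ∑ i, y i)
    (hy : ∃ i, y i ≠ ybar) :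
    (∀ (β₀ : ℝ) (β : Fin p → ℝ),
        Real.sqrt (∑ i, (y i - ybar - ∑ j, X i j * (0 : ℝ)) ^ 2)
            + lam * ∑ j : Fin p, |(0 : ℝ)|
          ≤ Real.sqrt (∑ i, (y i - β₀ - ∑ j, X i j * β j) ^ 2)
            + lam * ∑ j, |β j|) ↔
      ‖(fun j => ∑ i, X i j * (y i - ybar) : Fin p → ℝ)‖
          / Real.sqrt (∑ i, (y i - ybar) ^ 2) ≤ lam := by
  obtain ⟨i₀, hi₀⟩ := hy
  have hmean : ∑ i, (y i - ybar) = 0 := by simpa [hybar] using sum_sub_mean_eq_zero y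
  have ha : 0 < √(∑ i, (y i - ybar) ^ 2) :=
    Real.sqrt_pos.2 <| sum_pos' (fun i _ => sq_nonneg _) ⟨i₀, mem_univ _,
      pow_two_pos_of_ne_zero (sub_ne_zero.2 hi₀)⟩
  simp only [mul_zero, sum_const_zero, sub_zero, abs_zero, add_zero]
  rw [div_le_iff₀ ha]
  constructor
  · intro hmin
    by_contra! hlt
    obtain ⟨j, hj⟩ : ∃ j, lam * √(∑ i, (y i - ybar) ^ 2) < |(Xᵀ *ᵥ (fun i => y i - ybar)) j| := by
      by_contra! hle
      exact hlt.not_ge ((pi_norm_le_iff_of_nonneg (mul_nonneg hlam ha.le)).2 hle)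
    obtain ⟨β, hβ⟩ := exists_sqrt_sum_sq_sub_add_lt X _ ha hj
    exact (hmin ybar β).not_gt hβ
  · exact sqrt_sum_sq_le_of_norm_le X y hlam hmean
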